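/- arXiv:math/0512138 — 4 statements merged into one kernel-verified Lean document; each statement's English description precedes it below -/
import Mathlib

section
/- Let A be a commutative unital algebra over a field K and let S be an abelian semigroup acting on A by algebra endomorphisms ρ such that each ρ is an isomorphism of A onto the compressed algebra ρ(1)Aρ(1). In any unital algebra containing A together with elements U_ρ, U*_ρ (ρ ∈ S) satisfying U*_ρ U_ρ = 1, U_ρ U*_ρ = ρ(1), U_{ρ₁ρ₂} = U_{ρ₁}U_{ρ₂}, U*_{ρ₂ρ₁} = U*_{ρ₁}U*_{ρ₂}, U_ρ x = ρ(x) U_ρ and x U*_ρ = U*_ρ ρ(x) for all x ∈ A, one has the monomial product formula: U*_{ρ₁} a U_{ρ₂} · U*_{ρ₃} b U_{ρ₄} = U*_{ρ₁ρ₃} ρ₃(a) ρ₂ρ₃(1) ρ₂(b) U_{ρ₂ρ₄} for all ρ₁,ρ₂,ρ₃,ρ₄ ∈ S and a,b ∈ A. -/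
/-- The monomial product formula in the semigroup crossed product `A ⋊ S`:
`U*_{ρ₁} a U_{ρ₂} · U*_{ρ₃} b U_{ρ₄} = U*_{ρ₁ρ₃} ρ₃(a) (ρ₂ρ₃)(1) ρ₂(b) U_{ρ₂ρ₄}`. -/
theorem crossed_product_monomial_formula
    {K A B S : Type*} [Field K] [CommRing A] [Ring B]
    [Algebra K A] [Algebra K B] [CommMonoid S]
    (ι : A →ₐ[K] B) (hι : Function.Injective ι)
    (σ : S → (A →ₙₐ[K] A))
    (hσmul : ∀ s t : S, σ (s * t) = (σ s).comp (σ t))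
    (U Ustar : S → B)
    (h1 : ∀ ρ : S, Ustar ρ * U ρ = 1)
    (h2 : ∀ ρ : S, U ρ * Ustar ρ = ι (σ ρ 1))
    (h3 : ∀ ρ₁ ρ₂ : S, U (ρ₁ * ρ₂) = U ρ₁ * U ρ₂)
    (h4 : ∀ ρ₁ ρ₂ : S, Ustar (ρ₂ * ρ₁) = Ustar ρ₁ * Ustar ρ₂)
    (h5 : ∀ (ρ : S) (x : A), U ρ * ι x = ι (σ ρ x) * U ρ)
    (h6 : ∀ (ρ : S) (x : A), ι x * Ustar ρ = Ustar ρ * ι (σ ρ x)) :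
    ∀ (ρ₁ ρ₂ ρ₃ ρ₄ : S) (a b : A),
      Ustar ρ₁ * ι a * U ρ₂ * (Ustar ρ₃ * ι b * U ρ₄) =
        Ustar (ρ₁ * ρ₃) * ι (σ ρ₃ a * σ (ρ₂ * ρ₃) 1 * σ ρ₂ b) * U (ρ₂ * ρ₄) := by
  intro ρ₁ ρ₂ ρ₃ ρ₄ a b
  have h5' : ∀ (ρ : S) (x : A) (c : B), U ρ * (ι x * c) = ι (σ ρ x) * (U ρ * c) := by
    intro ρ x c; rw [← mul_assoc, h5, mul_assoc]
  have h6' : ∀ (ρ : S) (x : A) (c : B), ι x * (Ustar ρ * c) = Ustar ρ * (ι (σ ρ x) * c) := by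
    intro ρ x c; rw [← mul_assoc, h6, mul_assoc]
  have hcomp : (σ (ρ₂ * ρ₃)) (1 : A) = σ ρ₂ (σ ρ₃ 1) := by rw [hσmul]; rfl
  have hU' : ∀ c : B, U ρ₂ * (Ustar ρ₃ * c) = Ustar ρ₃ * (ι (σ (ρ₂ * ρ₃) 1) * (U ρ₂ * c)) := by
    intro c
    have e1 : U ρ₂ * (Ustar ρ₃ * c) = Ustar ρ₃ * (U ρ₃ * (U ρ₂ * (Ustar ρ₃ * c))) := by
      conv_rhs => rw [← mul_assoc, h1, one_mul]
    rw [e1, ← mul_assoc (U ρ₃) (U ρ₂), ← h3, mul_comm ρ₃ ρ₂, h3, mul_assoc (U ρ₂),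
      ← mul_assoc (U ρ₃) (Ustar ρ₃) c, h2, h5', hcomp]
  have key : Ustar ρ₁ * (ι a * (U ρ₂ * (Ustar ρ₃ * (ι b * U ρ₄)))) =
      Ustar (ρ₁ * ρ₃) * (ι (σ ρ₃ a) * (ι (σ (ρ₂ * ρ₃) 1) * (ι (σ ρ₂ b) * U (ρ₂ * ρ₄)))) := by
    rw [hU', h6', h5', ← h3, ← mul_assoc (Ustar ρ₁), mul_comm ρ₁ ρ₃, ← h4]
  calc Ustar ρ₁ * ι a * U ρ₂ * (Ustar ρ₃ * ι b * U ρ₄)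
      = Ustar ρ₁ * (ι a * (U ρ₂ * (Ustar ρ₃ * (ι b * U ρ₄)))) := by
        simp only [mul_assoc]
    _ = Ustar (ρ₁ * ρ₃) * ι (σ ρ₃ a * σ (ρ₂ * ρ₃) 1 * σ ρ₂ b) * U (ρ₂ * ρ₄) := by
        rw [key, map_mul, map_mul]; simp only [mul_assoc]
end

section
/- Let z be a complex number with Re(z) > 0. Then the Beta function B(z,ε) = Γ(z)Γ(ε)/Γ(z+ε) has a simple pole at ε = 0 with residue 1, and its finite part is minus the digamma value minus Euler's constant: lim_{ε→0⁺} ( Γ(z)Γ(ε)/Γ(z+ε) − 1/ε ) = −Γ′(z)/Γ(z) − γ, where γ is the Euler–Mascheroni constant. -/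
open Real Complex Filter Set Topology

/-!
Since `Γ(ε) = Γ(1 + ε) / ε`, we have `B(z, ε) - 1/ε = (g ε - g 0) / ε` for the function
`g w = Γ(z) Γ(1 + w) / Γ(z + w)`, which is holomorphic at `0` with `g 0 = 1`. The finite part is
therefore `g'(0) = Γ'(1) - Γ'(z)/Γ(z) = -γ - Γ'(z)/Γ(z)`.
-/

namespace Complex

local notation "γ" => Real.eulerMascheroniConstant

theorem ne_neg_natCast_of_re_pos {z : ℂ} (hz : 0 < z.re) (m : ℕ) : z ≠ -m := by
  rintro rfl
  simpa using hz.trans_le' (neg_nonpos.mpr (Nat.cast_nonneg m))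

theorem hasDerivAt_Gamma_mul_Gamma_one_add_div {z : ℂ} (hz : ∀ m : ℕ, z ≠ -m) :
    HasDerivAt (fun w => Gamma z * Gamma (1 + w) / Gamma (z + w))
      (-(deriv Gamma z / Gamma z) - γ) 0 := by
  have hΓz : Gamma z ≠ 0 := Gamma_ne_zero hz
  have hnum : HasDerivAt (fun w => Gamma (1 + w)) (-γ) 0 :=
    .comp_const_add 1 0 (by simpa using hasDerivAt_Gamma_one)
  have hden : HasDerivAt (fun w => Gamma (z + w)) (deriv Gamma z) 0 :=
    .comp_const_add z 0 (by simpa using (differentiableAt_Gamma z hz).hasDerivAt)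
  refine ((hnum.const_mul (Gamma z)).div hden (by simpa using hΓz)).congr_deriv ?_
  rw [add_zero, add_zero, Gamma_one]
  field_simp
  ring

theorem Gamma_mul_Gamma_div_sub_inv {w : ℂ} (hw : w ≠ 0) (z : ℂ) :
    Gamma z * Gamma w / Gamma (z + w) - 1 / w =
      (Gamma z * Gamma (1 + w) / Gamma (z + w) - 1) / w := by
  rw [add_comm 1 w, Gamma_add_one w hw]
  field_simp

theorem tendsto_Gamma_mul_Gamma_div_sub_inv {z : ℂ} (hz : ∀ m : ℕ, z ≠ -m) :
    Tendsto (fun w => Gamma z * Gamma w / Gamma (z + w) - 1 / w) (𝓝[≠] 0)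
      (𝓝 (-(deriv Gamma z / Gamma z) - γ)) := by
  have hslope := hasDerivAt_iff_tendsto_slope.mp (hasDerivAt_Gamma_mul_Gamma_one_add_div hz)
  refine hslope.congr' ?_
  filter_upwards [self_mem_nhdsWithin] with w (hw : w ≠ 0)
  rw [slope_fun_def_field, Gamma_mul_Gamma_div_sub_inv hw]
  simp only [add_zero, Gamma_one, mul_one, div_self (Gamma_ne_zero hz), sub_zero]

end Complex

/-- For `Re z > 0`, the Beta function `B(z,ε) = Γ(z)Γ(ε)/Γ(z+ε)` has a simple pole at `ε = 0`
with residue `1` and finite part `−Γ′(z)/Γ(z) − γ`: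
`lim_{ε→0⁺} (Γ(z)Γ(ε)/Γ(z+ε) − 1/ε) = −Γ′(z)/Γ(z) − γ`. -/
theorem beta_finite_part (z : ℂ) (hz : 0 < z.re) :
    Tendsto
      (fun ε : ℝ =>
        Complex.Gamma z * Complex.Gamma (ε : ℂ) / Complex.Gamma (z + (ε : ℂ)) - 1 / (ε : ℂ))
      (nhdsWithin 0 (Ioi 0))
      (nhds (-(deriv Complex.Gamma z / Complex.Gamma z) -
        (Real.eulerMascheroniConstant : ℂ))) := by
  have hofReal : Tendsto ((↑) : ℝ → ℂ) (𝓝[>] 0) (𝓝[≠] ((0 : ℝ) : ℂ)) :=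
    continuous_ofReal.continuousWithinAt.tendsto_nhdsWithin fun _ hx ↦
      ofReal_ne_zero.mpr (ne_of_gt hx)
  rw [ofReal_zero] at hofReal
  exact (tendsto_Gamma_mul_Gamma_div_sub_inv (ne_neg_natCast_of_re_pos hz)).comp hofReal
end

section
/- Let (Y, y₀) be a pointed set and S an abelian monoid acting on Y by maps fixing y₀. For s ∈ S set X_s = { y ∈ Y : s·y = y₀ }, and for s, s′ = sr define ξ_{s,s′} : X_{sr} → X_s by y ↦ r·y; let X = lim← X_s be the inverse limit over the divisibility preorder on S, with projections ξ_u : X → X_u. Then for each s ∈ S there is a well-defined map β_s : X → X characterized by ξ_{su}(β_s(x)) = ξ_u(x) for all u ∈ S, and β_s is a bijection from X onto the subset X^{e_s} = { x ∈ X : ξ_s(x) = y₀ }, with inverse characterized by ξ_u(β_s^{−1}(x)) = ξ_{su}(x) for all u ∈ S, x ∈ X^{e_s}. -/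
/-- The projective limit `X = lim← X_s` of the sets `X_s = {y : s·y = y₀}` along the
divisibility preorder of the abelian monoid `S`: an element is a family `(x_s)` with
`s·x_s = y₀` and `ξ_{s,sr}(x_{sr}) = r·x_{sr} = x_s`. -/
def EndoLimit {Y S : Type*} [CommMonoid S] (act : S →* Function.End Y) (y₀ : Y) : Type _ :=
  { x : S → Y // (∀ s : S, act s (x s) = y₀) ∧ ∀ s r : S, act r (x (s * r)) = x s }

/-!
Since `S` is commutative and fixes `y₀`, `(s·x_v)_v` is again a compatible family, and its
`su`-component is `s·x_{us} = x_u`. Conversely the compatibility `x'_v = s·x'_{vs}` forces every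
`β` with `β(x)_{su} = x_u` to be this map. On `X^{e_s}` the reindexing `(x_{su})_u` is compatible
and is inverse to it.
-/

namespace EndoLimit

variable {Y S : Type*} [CommMonoid S] {act : S →* Function.End Y} {y₀ : Y}

lemma act_comm_apply (a b : S) (y : Y) : act a (act b y) = act b (act a y) := by
  change (act a * act b) y = (act b * act a) y
  rw [← map_mul, ← map_mul, mul_comm]

@[ext]
lemma ext {x x' : EndoLimit act y₀} (h : ∀ u, x.1 u = x'.1 u) : x = x' :=
  Subtype.ext (funext h)

/-- The map `β_s`. -/
def shift (h0 : ∀ s : S, act s y₀ = y₀) (s : S) (x : EndoLimit act y₀) : EndoLimit act y₀ :=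
  ⟨fun v => act s (x.1 v),
    fun v => by rw [act_comm_apply, x.2.1 v, h0],
    fun v r => by rw [act_comm_apply, x.2.2 v r]⟩

/-- The inverse of `β_s` on `X^{e_s}`. -/
def unshift (s : S) (x : EndoLimit act y₀) (hx : x.1 s = y₀) : EndoLimit act y₀ :=
  ⟨fun u => x.1 (s * u),
    fun u => by rw [x.2.2 s u, hx],
    fun u r => by dsimp only; rw [← mul_assoc, x.2.2 (s * u) r]⟩

variable (h0 : ∀ s : S, act s y₀ = y₀) (s : S)

lemma shift_apply_mul (x : EndoLimit act y₀) (u : S) : (shift h0 s x).1 (s * u) = x.1 u := by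
  rw [mul_comm]
  exact x.2.2 u s

lemma shift_apply_self (x : EndoLimit act y₀) : (shift h0 s x).1 s = y₀ :=
  x.2.1 s

lemma eq_shift_of_apply_mul {x x' : EndoLimit act y₀} (h : ∀ u, x'.1 (s * u) = x.1 u) :
    x' = shift h0 s x := by
  ext v
  rw [← x'.2.2 v s, mul_comm, h]
  rfl

lemma unshift_shift (x : EndoLimit act y₀) :
    unshift s (shift h0 s x) (shift_apply_self h0 s x) = x := by
  ext u
  exact shift_apply_mul h0 s x u

lemma shift_unshift (x : EndoLimit act y₀) (hx : x.1 s = y₀) :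
    shift h0 s (unshift s x hx) = x :=
  (eq_shift_of_apply_mul h0 s fun _ => rfl).symm

end EndoLimit

open EndoLimit in
/-- For a pointed set `(Y, y₀)` with an abelian monoid `S` acting by maps fixing `y₀`,
each `s ∈ S` induces a well-defined map `β_s : X → X`, characterized (uniquely) by
`ξ_{su}(β_s(x)) = ξ_u(x)` for all `u`, which is a bijection of `X` onto the subset
`X^{e_s} = {x : ξ_s(x) = y₀}`, with inverse characterized by
`ξ_u(β_s⁻¹(x)) = ξ_{su}(x)`. -/
theorem endomotive_partial_iso {Y S : Type*} [CommMonoid S]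
    (act : S →* Function.End Y) (y₀ : Y) (h0 : ∀ s : S, act s y₀ = y₀) (s : S) :
    ∃ β βinv : EndoLimit act y₀ → EndoLimit act y₀,
      (∀ (x : EndoLimit act y₀) (u : S), (β x).1 (s * u) = x.1 u) ∧
      (∀ β' : EndoLimit act y₀ → EndoLimit act y₀,
        (∀ (x : EndoLimit act y₀) (u : S), (β' x).1 (s * u) = x.1 u) → β' = β) ∧
      (∀ x : EndoLimit act y₀, (β x).1 s = y₀) ∧
      (∀ x : EndoLimit act y₀, x.1 s = y₀ → ∀ u : S, (βinv x).1 u = x.1 (s * u)) ∧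
      (∀ x : EndoLimit act y₀, βinv (β x) = x) ∧
      (∀ x : EndoLimit act y₀, x.1 s = y₀ → β (βinv x) = x) := by
  classical
  refine ⟨shift h0 s, fun x => if hx : x.1 s = y₀ then unshift s x hx else x,
    shift_apply_mul h0 s,
    fun β' hβ' => funext fun x => eq_shift_of_apply_mul h0 s (hβ' x),
    shift_apply_self h0 s,
    fun x hx u => by dsimp only; rw [dif_pos hx]; rfl,
    fun x => by dsimp only; rw [dif_pos (shift_apply_self h0 s x)]; exact unshift_shift h0 s x,
    fun x hx => by dsimp only; rw [dif_pos hx]; exact shift_unshift h0 s x hx⟩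
end

section
/- Let f : ℝ → ℂ be a Schwartz function and a ∈ ℝ with f(a) = 0. Then the function f₁ defined by f₁(t) = f(t)/(t − a) for t ≠ a and f₁(a) = f′(a) is again a Schwartz function, and f(t) = (t − a) f₁(t) for all t. -/
/-!
Put `g := dslope f a`. By the fundamental theorem of calculus, `g t = ∫₀¹ f'(a + s(t - a)) ds`,
and differentiating under the integral sign gives `g⁽ⁿ⁾ t = ∫₀¹ sⁿ f⁽ⁿ⁺¹⁾(a + s(t - a)) ds`,
so `g` is smooth. Since `f a = 0`, `f = (t - a) • g`, and the Leibniz rule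
`f⁽ⁿ⁺¹⁾ = (n + 1) • g⁽ⁿ⁾ + (t - a) • g⁽ⁿ⁺¹⁾` bounds `g⁽ⁿ⁺¹⁾` by `f⁽ⁿ⁺¹⁾` and `g⁽ⁿ⁾` wherever
`|t - a| ≥ 1`; by induction on `n` every `|t|ᵏ g⁽ⁿ⁾ t` is bounded there, and it is bounded on the
compact ball `|t - a| ≤ 1` by continuity.
-/

open intervalIntegral MeasureTheory Metric Set
open scoped ContDiff Interval

variable {E : Type*} [NormedAddCommGroup E] [NormedSpace ℝ E]

noncomputable def segmentMoment (φ : ℝ → E) (a : ℝ) (n : ℕ) (t : ℝ) : E :=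
  ∫ s in (0 : ℝ)..1, s ^ n • φ (a + s * (t - a))

lemma continuous_segmentMoment_integrand {φ : ℝ → E} (hφ : Continuous φ) (a t : ℝ) (n : ℕ) :
    Continuous fun s : ℝ => s ^ n • φ (a + s * (t - a)) := by
  fun_prop

lemma hasDerivAt_segmentMoment [CompleteSpace E] {φ : ℝ → E} (hφ : ContDiff ℝ 1 φ) (a : ℝ)
    (n : ℕ) (t : ℝ) :
    HasDerivAt (segmentMoment φ a n) (segmentMoment (deriv φ) a (n + 1) t) t := by
  obtain ⟨C, hC⟩ := (isCompact_closedBall a (|t - a| + 1)).exists_bound_of_continuousOn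
    (hφ.continuous_deriv le_rfl).continuousOn
  have h_bound : ∀ s ∈ Ι (0 : ℝ) 1, ∀ x ∈ ball t 1,
      ‖s ^ (n + 1) • deriv φ (a + s * (x - a))‖ ≤ C := by
    rintro s hs x hx
    rw [uIoc_of_le zero_le_one] at hs
    obtain ⟨hs0, hs1⟩ := hs
    have hmem : a + s * (x - a) ∈ closedBall a (|t - a| + 1) := by
      rw [mem_closedBall, Real.dist_eq, add_sub_cancel_left, abs_mul, abs_of_pos hs0]
      have := abs_sub_le x t a
      rw [mem_ball, Real.dist_eq] at hx
      nlinarith [abs_nonneg (x - a)]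
    calc ‖s ^ (n + 1) • deriv φ (a + s * (x - a))‖
        = s ^ (n + 1) * ‖deriv φ (a + s * (x - a))‖ := by
          rw [norm_smul, Real.norm_eq_abs, abs_pow, abs_of_pos hs0]
      _ ≤ 1 * C := by
          gcongr
          · exact pow_le_one₀ hs0.le hs1
          · exact hC _ hmem
      _ = C := one_mul C
  have h_diff : ∀ s x, HasDerivAt (fun x => s ^ n • φ (a + s * (x - a)))
      (s ^ (n + 1) • deriv φ (a + s * (x - a))) x := by
    intro s x
    have hin : HasDerivAt (fun x : ℝ => a + s * (x - a)) s x := by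
      simpa using ((hasDerivAt_id x).sub_const a).const_mul s |>.const_add a
    have := (((hφ.differentiable one_ne_zero) _).hasDerivAt.scomp x hin).const_smul (s ^ n)
    rwa [smul_smul, ← pow_succ] at this
  have h_cont := continuous_segmentMoment_integrand hφ.continuous a
  exact (hasDerivAt_integral_of_dominated_loc_of_deriv_le (ball_mem_nhds t one_pos)
    (.of_forall fun x => (h_cont x n).aestronglyMeasurable) ((h_cont t n).intervalIntegrable 0 1)
    (continuous_segmentMoment_integrand (hφ.continuous_deriv le_rfl) a t
      (n + 1)).aestronglyMeasurable
    (.of_forall h_bound) intervalIntegrable_const (.of_forall fun s _ x _ => h_diff s x)).2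

lemma sub_smul_segmentMoment_deriv [CompleteSpace E] {f : ℝ → E} (hf : ContDiff ℝ 1 f)
    (a t : ℝ) : (t - a) • segmentMoment (deriv f) a 0 t = f t - f a := by
  have h_deriv : ∀ s ∈ [[(0 : ℝ), 1]], HasDerivAt (fun s => f (a + s * (t - a)))
      ((t - a) • deriv f (a + s * (t - a))) s := fun s _ => by
    have hin : HasDerivAt (fun s : ℝ => a + s * (t - a)) (t - a) s := by
      simpa using ((hasDerivAt_id s).mul_const (t - a)).const_add a
    exact ((hf.differentiable one_ne_zero) _).hasDerivAt.scomp s hin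
  have h_int := (continuous_segmentMoment_integrand (hf.continuous_deriv le_rfl) a t 0).const_smul
    (t - a) |>.intervalIntegrable (μ := volume) 0 1
  simp only [pow_zero, one_smul] at h_int
  have := integral_eq_sub_of_hasDerivAt h_deriv h_int
  simp only [one_mul, zero_mul, add_zero, add_sub_cancel, intervalIntegral.integral_smul] at this
  simpa [segmentMoment] using this

lemma dslope_eq_segmentMoment_deriv [CompleteSpace E] {f : ℝ → E} (hf : ContDiff ℝ 1 f)
    (a : ℝ) : dslope f a = segmentMoment (deriv f) a 0 := by
  ext t
  rcases eq_or_ne t a with rfl | ht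
  · simp [segmentMoment]
  · refine smul_right_injective E (sub_ne_zero.2 ht) ?_
    simp only [sub_smul_dslope, sub_smul_segmentMoment_deriv hf]

lemma iteratedDeriv_segmentMoment [CompleteSpace E] {φ : ℝ → E} (hφ : ContDiff ℝ ∞ φ) (a : ℝ)
    (n m : ℕ) :
    iteratedDeriv m (segmentMoment φ a n) = segmentMoment (iteratedDeriv m φ) a (n + m) := by
  induction m with
  | zero => simp
  | succ m ih =>
    have hφm : ContDiff ℝ 1 (iteratedDeriv m φ) :=
      contDiff_infty.1 (iteratedDeriv_eq_iterate (f := φ) ▸ hφ.iterate_deriv m) 1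
    ext t
    rw [iteratedDeriv_succ, ih, (hasDerivAt_segmentMoment hφm a (n + m) t).deriv,
      ← iteratedDeriv_succ, add_assoc]

lemma contDiff_segmentMoment [CompleteSpace E] {φ : ℝ → E} (hφ : ContDiff ℝ ∞ φ) (a : ℝ)
    (n : ℕ) :
    ContDiff ℝ ∞ (segmentMoment φ a n) := by
  refine contDiff_of_differentiable_iteratedDeriv fun m _ t => ?_
  have hφm : ContDiff ℝ 1 (iteratedDeriv m φ) :=
    contDiff_infty.1 (iteratedDeriv_eq_iterate (f := φ) ▸ hφ.iterate_deriv m) 1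
  rw [iteratedDeriv_segmentMoment hφ]
  exact (hasDerivAt_segmentMoment hφm a _ t).differentiableAt

theorem ContDiff.dslope [CompleteSpace E] {f : ℝ → E} (hf : ContDiff ℝ ∞ f) (a : ℝ) :
    ContDiff ℝ ∞ (dslope f a) := by
  rw [dslope_eq_segmentMoment_deriv (contDiff_infty.1 hf 1)]
  exact contDiff_segmentMoment (contDiff_infty_iff_deriv.1 hf).2 a 0

lemma iteratedDeriv_succ_sub_smul {g : ℝ → E} (hg : ContDiff ℝ ∞ g) (a : ℝ) (n : ℕ) :
    iteratedDeriv (n + 1) (fun t => (t - a) • g t) =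
      fun t => ((n : ℝ) + 1) • iteratedDeriv n g t + (t - a) • iteratedDeriv (n + 1) g t := by
  have hd : ∀ m t, HasDerivAt (iteratedDeriv m g) (iteratedDeriv (m + 1) g t) t := fun m t => by
    rw [iteratedDeriv_succ]
    exact (hg.differentiable_iteratedDeriv m
      (WithTop.coe_lt_coe.2 (ENat.natCast_lt_top m))).differentiableAt.hasDerivAt
  induction n with
  | zero =>
    ext t
    rw [zero_add, iteratedDeriv_one, iteratedDeriv_zero]
    refine ((((hasDerivAt_id t).sub_const a).smul (hd 0 t)).congr_deriv ?_).deriv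
    simp [add_comm]
  | succ n ih =>
    ext t
    rw [iteratedDeriv_succ, ih]
    refine ((((hd n t).const_smul ((n : ℝ) + 1)).add
      (((hasDerivAt_id t).sub_const a).smul (hd (n + 1) t))).congr_deriv ?_).deriv
    simp only [id, one_smul]
    push_cast
    module

namespace SchwartzMap

variable {f : 𝓢(ℝ, E)} {g : ℝ → E} {a : ℝ}

lemma exists_pow_mul_norm_iteratedDeriv_le_of_sub_smul_eq (hg : ContDiff ℝ ∞ g)
    (hfg : ∀ t, (t - a) • g t = f t) (n k : ℕ) :
    ∃ C, ∀ x, 1 ≤ |x - a| → |x| ^ k * ‖iteratedDeriv n g x‖ ≤ C := by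
  have h_le : ∀ x, 1 ≤ |x - a| → ∀ v : E, ‖v‖ ≤ ‖(x - a) • v‖ := fun x hx v => by
    rw [norm_smul, Real.norm_eq_abs]
    exact le_mul_of_one_le_left (norm_nonneg v) hx
  induction n generalizing k with
  | zero =>
    refine ⟨SchwartzMap.seminorm ℝ k 0 f, fun x hx => ?_⟩
    calc |x| ^ k * ‖iteratedDeriv 0 g x‖ ≤ |x| ^ k * ‖iteratedDeriv 0 f x‖ := by
          rw [iteratedDeriv_zero, iteratedDeriv_zero, ← hfg]
          gcongr
          exact h_le x hx _
      _ ≤ SchwartzMap.seminorm ℝ k 0 f := le_seminorm' ℝ k 0 f x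
  | succ n ih =>
    obtain ⟨C, hC⟩ := ih k
    refine ⟨SchwartzMap.seminorm ℝ k (n + 1) f + (n + 1) * C, fun x hx => ?_⟩
    have h_rec : (x - a) • iteratedDeriv (n + 1) g x =
        iteratedDeriv (n + 1) f x - ((n : ℝ) + 1) • iteratedDeriv n g x := by
      rw [show (f : ℝ → E) = fun t => (t - a) • g t from funext fun t => (hfg t).symm,
        iteratedDeriv_succ_sub_smul hg, add_sub_cancel_left]
    have h_norm : ‖iteratedDeriv (n + 1) g x‖ ≤
        ‖iteratedDeriv (n + 1) f x‖ + (n + 1) * ‖iteratedDeriv n g x‖ := by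
      calc ‖iteratedDeriv (n + 1) g x‖ ≤ ‖(x - a) • iteratedDeriv (n + 1) g x‖ := h_le x hx _
        _ ≤ ‖iteratedDeriv (n + 1) f x‖ + ‖((n : ℝ) + 1) • iteratedDeriv n g x‖ :=
          h_rec ▸ norm_sub_le _ _
        _ = ‖iteratedDeriv (n + 1) f x‖ + (n + 1) * ‖iteratedDeriv n g x‖ := by
          rw [norm_smul, Real.norm_of_nonneg (by positivity)]
    calc |x| ^ k * ‖iteratedDeriv (n + 1) g x‖
        ≤ |x| ^ k * (‖iteratedDeriv (n + 1) f x‖ + (n + 1) * ‖iteratedDeriv n g x‖) := by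
          gcongr
      _ = |x| ^ k * ‖iteratedDeriv (n + 1) f x‖ + (n + 1) * (|x| ^ k * ‖iteratedDeriv n g x‖) := by
          ring
      _ ≤ SchwartzMap.seminorm ℝ k (n + 1) f + (n + 1) * C := by
          gcongr
          · exact le_seminorm' ℝ k (n + 1) f x
          · exact hC x hx

lemma decay_of_sub_smul_eq (hg : ContDiff ℝ ∞ g) (hfg : ∀ t, (t - a) • g t = f t) (k n : ℕ) :
    ∃ C, ∀ x, ‖x‖ ^ k * ‖iteratedFDeriv ℝ n g x‖ ≤ C := by
  obtain ⟨C₁, h_far⟩ := exists_pow_mul_norm_iteratedDeriv_le_of_sub_smul_eq hg hfg n k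
  have h_cont : Continuous fun x => |x| ^ k * ‖iteratedDeriv n g x‖ :=
    (continuous_abs.pow k).mul (hg.continuous_iteratedDeriv n (WithTop.coe_le_coe.2 le_top)).norm
  obtain ⟨C₂, h_near⟩ :=
    (isCompact_closedBall a 1).exists_bound_of_continuousOn h_cont.continuousOn
  refine ⟨max C₁ C₂, fun x => ?_⟩
  rw [norm_iteratedFDeriv_eq_norm_iteratedDeriv, Real.norm_eq_abs]
  rcases le_or_gt 1 |x - a| with hx | hx
  · exact (h_far x hx).trans (le_max_left _ _)
  · refine (le_abs_self _).trans ((h_near x ?_).trans (le_max_right _ _))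
    rw [mem_closedBall, Real.dist_eq]
    exact hx.le

noncomputable def dslope [CompleteSpace E] (f : 𝓢(ℝ, E)) (a : ℝ) (hfa : f a = 0) :
    𝓢(ℝ, E) where
  toFun := _root_.dslope f a
  smooth' := f.smooth'.dslope a
  decay' := decay_of_sub_smul_eq (f.smooth'.dslope a) (sub_smul_dslope_of_zero hfa)

@[simp]
lemma coe_dslope [CompleteSpace E] (hfa : f a = 0) : ⇑(f.dslope a hfa) = _root_.dslope f a :=
  rfl

end SchwartzMap

/-- If `f` is a Schwartz function on `ℝ` with `f(a) = 0`, then `f₁(t) = f(t)/(t−a)`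
(with `f₁(a) = f′(a)`) is again a Schwartz function and `f(t) = (t−a) f₁(t)` for all `t`. -/
theorem schwartz_div_sub (f : SchwartzMap ℝ ℂ) (a : ℝ) (hfa : f a = 0) :
    ∃ f₁ : SchwartzMap ℝ ℂ,
      (∀ t : ℝ, t ≠ a → f₁ t = f t / ((t - a : ℝ) : ℂ)) ∧
      f₁ a = deriv (⇑f) a ∧
      ∀ t : ℝ, f t = ((t - a : ℝ) : ℂ) * f₁ t := by
  refine ⟨f.dslope a hfa, fun t ht => ?_, dslope_same _ _, fun t => ?_⟩
  · rw [SchwartzMap.coe_dslope, dslope_of_ne _ ht, slope_def_module, hfa, sub_zero,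
      Complex.real_smul, Complex.ofReal_inv, div_eq_inv_mul]
  · rw [SchwartzMap.coe_dslope, ← Complex.real_smul, sub_smul_dslope_of_zero hfa]
end
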